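/- For every δθ ∈ ℝ with δθ ≠ 0 and every δx, δp, x̂, p̂ ∈ ℝ² and θ̂ ∈ ℝ: exp_m(L(δθ, δx, δp)) · Ψ(θ̂, x̂, p̂) = Ψ(θ̂ + δθ, R(δθ) x̂ + B(δθ) δx, R(δθ) p̂ + B(δθ) δp), where exp_m is the matrix exponential and B(α) = [[sin α / α, −(1 − cos α)/α],[(1 − cos α)/α, sin α / α]]. (This identity shows the IEKF-SLAM update map φ(ξ, X̂) coincides with the Lie-group update exp(ξ) · χ̂ on SE₂(2).) -/

import Mathlib

open Matrix Real

/-- The 2×2 rotation matrix of angle `θ`. -/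
noncomputable def Rmat (θ : ℝ) : Matrix (Fin 2) (Fin 2) ℝ :=
  !![Real.cos θ, -Real.sin θ; Real.sin θ, Real.cos θ]

/-- The matrix `J = [[0,-1],[1,0]]`. -/
def Jmat : Matrix (Fin 2) (Fin 2) ℝ := !![0, -1; 1, 0]


/-- The element `Ψ(θ, x, p)` of the group `SE₂(2)` of multiple direct planar isometries,
as a 4×4 matrix: upper-left 2×2 block `R(θ)`, third and fourth columns with top blocks
`x` and `p`, bottom-right block `I₂`. -/
noncomputable def Psi (θ : ℝ) (x p : Fin 2 → ℝ) : Matrix (Fin 4) (Fin 4) ℝ :=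
  !![Real.cos θ, -Real.sin θ, x 0, p 0;
     Real.sin θ,  Real.cos θ, x 1, p 1;
     0, 0, 1, 0;
     0, 0, 0, 1]

/-- The element `L(α, u, q)` of the Lie algebra `se₂(2)`: upper-left 2×2 block `α J`, third and
fourth columns with top blocks `u` and `q`, last two rows zero. -/
def Lmat (α : ℝ) (u q : Fin 2 → ℝ) : Matrix (Fin 4) (Fin 4) ℝ :=
  !![0, -α, u 0, q 0;
     α,  0, u 1, q 1;
     0,  0, 0, 0;
     0,  0, 0, 0]

/-- The matrix `B(α)` appearing in the closed form of the `SE(2)` exponential. -/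
noncomputable def Bmat (α : ℝ) : Matrix (Fin 2) (Fin 2) ℝ :=
  !![Real.sin α / α, -((1 - Real.cos α) / α);
     (1 - Real.cos α) / α, Real.sin α / α]

/-!
Conjugating by the pure translation `Ψ(0, a, b)` turns the rotation generator `L(α, 0, 0)` into
`L(α, αJa, αJb)`. The exponential of `L(α, 0, 0)` is the rotation `Ψ(α, 0, 0)`, read off from
`exp(iα)` through the embedding `(z, r) ↦ diag(z, r I₂)` of `ℂ × ℝ`; conjugating back gives
translation parts `(R(α) - 1)a`. For `α ≠ 0` take `a = -(αJ)⁻¹u`: then `(R(α) - 1)a = B(α)u`,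
since `B(α) = (R(α) - 1)(αJ)⁻¹`. The theorem is then the group law of `Ψ`.
-/

lemma Psi_mul (θ θ' : ℝ) (x p x' p' : Fin 2 → ℝ) :
    Psi θ x p * Psi θ' x' p' = Psi (θ + θ') (x + Rmat θ *ᵥ x') (p + Rmat θ *ᵥ p') := by
  ext i j
  fin_cases i <;> fin_cases j <;>
    simp [Psi, Rmat, mul_apply, Fin.sum_univ_four, dotProduct, cos_add, sin_add] <;> ring

lemma Psi_zero_zero_zero : Psi 0 0 0 = 1 := by
  ext i j
  fin_cases i <;> fin_cases j <;> simp [Psi, one_apply]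

lemma Rmat_zero : Rmat 0 = 1 := by
  simp [Rmat, one_fin_two]

lemma Psi_zero_mul_Psi_zero_neg (a b : Fin 2 → ℝ) : Psi 0 a b * Psi 0 (-a) (-b) = 1 := by
  rw [Psi_mul, Rmat_zero, one_mulVec, one_mulVec, add_zero, add_neg_cancel, add_neg_cancel,
    Psi_zero_zero_zero]

lemma Lmat_eq_conj (α : ℝ) (a b : Fin 2 → ℝ) :
    Lmat α ((α • Jmat) *ᵥ a) ((α • Jmat) *ᵥ b) = Psi 0 (-a) (-b) * Lmat α 0 0 * Psi 0 a b := by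
  ext i j
  fin_cases i <;> fin_cases j <;>
    simp [Psi, Lmat, Jmat, mul_apply, Fin.sum_univ_four, dotProduct]

-- Also true at `α = 0`, where both sides are junk zeros (`x / 0 = 0`, `0⁻¹ = 0`).
lemma Bmat_eq_sub_one_mul (α : ℝ) : Bmat α = (Rmat α - 1) * (-α⁻¹ • Jmat) := by
  ext i j
  fin_cases i <;> fin_cases j <;>
    simp [Bmat, Rmat, Jmat, mul_apply, Fin.sum_univ_two, one_apply] <;> ring

def complexBlockHom : ℂ × ℝ →+* Matrix (Fin 4) (Fin 4) ℝ where
  toFun zr := !![zr.1.re, -zr.1.im, 0, 0;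
                 zr.1.im, zr.1.re, 0, 0;
                 0, 0, zr.2, 0;
                 0, 0, 0, zr.2]
  map_one' := by
    ext i j
    fin_cases i <;> fin_cases j <;> simp [one_apply]
  map_mul' a b := by
    ext i j
    fin_cases i <;> fin_cases j <;> simp [mul_apply, Fin.sum_univ_four] <;> ring
  map_zero' := by
    ext i j
    fin_cases i <;> fin_cases j <;> simp
  map_add' a b := by
    ext i j
    fin_cases i <;> fin_cases j <;> simp [neg_add_rev, add_comm]

lemma continuous_complexBlockHom : Continuous complexBlockHom := by
  refine continuous_matrix fun i j => ?_
  fin_cases i <;> fin_cases j <;> simp [complexBlockHom] <;> fun_prop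

lemma exp_Lmat_zero (α : ℝ) : NormedSpace.exp (Lmat α 0 0) = Psi α 0 0 := by
  have hL : Lmat α 0 0 = complexBlockHom (α * Complex.I, 0) := by
    ext i j
    fin_cases i <;> fin_cases j <;> simp [Lmat, complexBlockHom]
  have hPsi : Psi α 0 0 = complexBlockHom (Complex.exp (α * Complex.I), 1) := by
    ext i j
    fin_cases i <;> fin_cases j <;>
      simp [Psi, complexBlockHom, Complex.exp_ofReal_mul_I_re, Complex.exp_ofReal_mul_I_im]
  have hexp : NormedSpace.exp ((α * Complex.I, 0) : ℂ × ℝ) = (Complex.exp (α * Complex.I), 1) :=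
    Prod.ext (by rw [Prod.fst_exp, Complex.exp_eq_exp_ℂ]) (by rw [Prod.snd_exp, NormedSpace.exp_zero])
  rw [hL, hPsi, ← hexp]
  -- `map_exp` needs a normed ring; the operator norm induces the usual topology on matrices.
  open scoped Matrix.Norms.Operator in
  exact (NormedSpace.map_exp _ continuous_complexBlockHom _).symm

lemma exp_Lmat_smul_Jmat (α : ℝ) (a b : Fin 2 → ℝ) :
    NormedSpace.exp (Lmat α ((α • Jmat) *ᵥ a) ((α • Jmat) *ᵥ b)) =
      Psi α ((Rmat α - 1) *ᵥ a) ((Rmat α - 1) *ᵥ b) := by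
  have hinv : (Psi 0 a b)⁻¹ = Psi 0 (-a) (-b) := inv_eq_right_inv (Psi_zero_mul_Psi_zero_neg a b)
  have hunit : IsUnit (Psi 0 a b) := IsUnit.of_mul_eq_one _ (Psi_zero_mul_Psi_zero_neg a b)
  rw [Lmat_eq_conj, ← hinv, Matrix.exp_conj' _ _ hunit, hinv, exp_Lmat_zero, Psi_mul, Psi_mul]
  simp only [Rmat_zero, zero_add, add_zero, mulVec_zero, neg_add_eq_sub, sub_mulVec, one_mulVec]

lemma smul_Jmat_mul_smul_Jmat {α : ℝ} (hα : α ≠ 0) : (α • Jmat) * (-α⁻¹ • Jmat) = 1 := by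
  ext i j
  fin_cases i <;> fin_cases j <;> simp [Jmat, mul_apply, Fin.sum_univ_two, hα]

lemma exp_Lmat {α : ℝ} (hα : α ≠ 0) (u q : Fin 2 → ℝ) :
    NormedSpace.exp (Lmat α u q) = Psi α (Bmat α *ᵥ u) (Bmat α *ᵥ q) := by
  have h := exp_Lmat_smul_Jmat α ((-α⁻¹ • Jmat) *ᵥ u) ((-α⁻¹ • Jmat) *ᵥ q)
  rwa [mulVec_mulVec, mulVec_mulVec, mulVec_mulVec, mulVec_mulVec, smul_Jmat_mul_smul_Jmat hα,
    one_mulVec, one_mulVec, ← Bmat_eq_sub_one_mul] at h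

/-- The IEKF-SLAM update map coincides with the Lie-group update on
`SE₂(2)`: for `δθ ≠ 0`,
`exp_m(L(δθ, δx, δp)) Ψ(θ̂, x̂, p̂) = Ψ(θ̂+δθ, R(δθ)x̂ + B(δθ)δx, R(δθ)p̂ + B(δθ)δp)`. -/
theorem statement18 (δθ : ℝ) (hδθ : δθ ≠ 0) (δx δp xh ph : Fin 2 → ℝ) (θh : ℝ) :
    NormedSpace.exp (Lmat δθ δx δp) * Psi θh xh ph =
      Psi (θh + δθ) ((Rmat δθ).mulVec xh + (Bmat δθ).mulVec δx)
        ((Rmat δθ).mulVec ph + (Bmat δθ).mulVec δp) := by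
  rw [exp_Lmat hδθ, Psi_mul, add_comm δθ, add_comm (Bmat δθ *ᵥ δx), add_comm (Bmat δθ *ᵥ δp)]
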